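/- arXiv:1603.06517 — 2 statements merged into one kernel-verified Lean document; each statement's English description precedes it below -/
import Mathlib

section
/- Let q = 1 and α = π²/2. For every A ∈ [0,1], the function y_A(x) = (A/2)(1 + cos(πx)) − √(1−A)·sin(πx) is a minimizer of λ(π²/2, 1) = π² and satisfies ∫_{−1}^{1} y_A(x) dx = A. In particular λ(π²/2,1) admits a positive minimizer (the case A = 1), and for each A ∈ (0,1) it admits a minimizer which changes sign in (−1,1) at a point x̄ ≠ 0 and has nonzero average ∫_{−1}^{1} y_A dx = A ≠ 0. -/
open MeasureTheory Real Filter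

noncomputable section

/-- `u ∈ H¹₀(-1,1)` with (weak) derivative `g`: `u` is absolutely continuous on `[-1,1]`
(being the indefinite integral of the integrable function `g`), vanishes at both endpoints,
and `g ∈ L²(-1,1)`. -/
def IsH10 (u g : ℝ → ℝ) : Prop :=
  IntervalIntegrable g volume (-1) 1 ∧
  MemLp g 2 (volume.restrict (Set.Ioo (-1 : ℝ) 1)) ∧
  (∀ x ∈ Set.Icc (-1 : ℝ) 1, u x = ∫ t in (-1 : ℝ)..x, g t) ∧
  u 1 = 0

/-- `u` is not identically zero on `[-1,1]`. -/
def Nontriv (u : ℝ → ℝ) : Prop := ∃ x ∈ Set.Icc (-1 : ℝ) 1, u x ≠ 0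

/-- The Rayleigh-type quotient `Q[u,α]` (with `g = u'`). -/
def Qfun (α q : ℝ) (u g : ℝ → ℝ) : ℝ :=
  ((∫ x in (-1 : ℝ)..1, (g x) ^ 2) +
      α * |∫ x in (-1 : ℝ)..1, |u x| ^ (q - 1) * u x| ^ (2 / q)) /
    ∫ x in (-1 : ℝ)..1, (u x) ^ 2

/-- `λ(α,q) = inf { Q[u,α] : u ∈ H¹₀(-1,1), u ≢ 0 }`. -/
def lam (α q : ℝ) : ℝ :=
  sInf {v : ℝ | ∃ u g : ℝ → ℝ, IsH10 u g ∧ Nontriv u ∧ Qfun α q u g = v}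

/-- `u` (with derivative `g`) is a minimizer for `λ(α,q)`. -/
def IsMinimizer (α q : ℝ) (u g : ℝ → ℝ) : Prop :=
  IsH10 u g ∧ Nontriv u ∧ Qfun α q u g = lam α q

/-- The critical value `α_q = sup { α : λ(α,q) < π² }`. -/
def alphaCrit (q : ℝ) : ℝ := sSup {α : ℝ | lam α q < π ^ 2}

/-- The family of minimizers for `q = 1`, `α = π²/2`. -/
def yA (A : ℝ) : ℝ → ℝ := fun x => A / 2 * (1 + Real.cos (π * x)) - Real.sqrt (1 - A) * Real.sin (π * x)

/-- The derivative of `yA`. -/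
def gA (A : ℝ) : ℝ → ℝ := fun x => -(A / 2) * π * Real.sin (π * x) - Real.sqrt (1 - A) * π * Real.cos (π * x)

/-!
For `u ∈ H¹₀(-1,1)` the conditions `u(±1) = 0` make `u` a continuous 2-periodic function, and
its Fourier coefficients on `[-1,1]` satisfy `û'(n) = iπn · û(n)`; this is proved by Fubini, since
`u` is only the primitive of an `L²` function. By Parseval,
`∫ u'² = 2π² ∑ n² |û(n)|² ≥ 2π² ∑_{n ≠ 0} |û(n)|² = π² ∫ u² - (π²/2) (∫ u)²`,
because `û(0) = ½ ∫ u`. Hence `Q[u, π²/2] ≥ π²`, with equality for the functions built from the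
modes `n = 0, ±1` only, such as `y_A = (A/2)(1 + cos πx) - √(1-A) sin πx`.
The sign change of `y_A` for `0 < A < 1` comes from the factorisation
`y_A(x) = cos(πx/2) · (A cos(πx/2) - 2√(1-A) sin(πx/2))`, whose second factor decreases from `A`
to `-2√(1-A)` on `[0,1]`.
-/

open Set

theorem ContinuousOn.memLp_restrict_of_isCompact {X E : Type*} [TopologicalSpace X]
    [MeasurableSpace X] [OpensMeasurableSpace X] [NormedAddCommGroup E]
    [SecondCountableTopologyEither X E]
    {μ : Measure X} [IsFiniteMeasureOnCompacts μ] {K : Set X} (hK : IsCompact K)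
    (hKm : MeasurableSet K) {f : X → E} (hf : ContinuousOn f K) (p : ENNReal) :
    MemLp f p (μ.restrict K) := by
  obtain ⟨C, hC⟩ := hK.exists_bound_of_continuousOn hf
  have : IsFiniteMeasure (μ.restrict K) := ⟨by simpa using hK.measure_lt_top⟩
  exact MemLp.of_bound (hf.aestronglyMeasurable hKm) C ((ae_restrict_iff' hKm).2 (ae_of_all _ hC))

theorem intervalIntegral.integral_indicator_Ici {E : Type*} [NormedAddCommGroup E] [NormedSpace ℝ E]
    {a b t : ℝ} (ht : t ∈ Ioc a b) (f : ℝ → E) :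
    ∫ x in a..b, (Ici t).indicator f x = ∫ x in t..b, f x := by
  have hset : Ici t ∩ Ioc a b = Icc t b := by
    ext x; simp only [mem_inter_iff, mem_Ici, mem_Ioc, mem_Icc]; grind
  rw [intervalIntegral.integral_of_le (ht.1.le.trans ht.2), intervalIntegral.integral_of_le ht.2,
    MeasureTheory.integral_indicator measurableSet_Ici,
    Measure.restrict_restrict measurableSet_Ici, hset, integral_Icc_eq_integral_Ioc]

theorem integrableOn_uncurry_indicator_Iic_mul {𝕜 : Type*} [RCLike 𝕜] {a b : ℝ} (hab : a ≤ b)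
    {g ψ : ℝ → 𝕜} (hg : IntervalIntegrable g volume a b) (hψ : ContinuousOn ψ (Icc a b)) :
    IntegrableOn (Function.uncurry fun x t => (Iic x).indicator (fun t => g t * ψ x) t)
      (uIoc a b ×ˢ uIoc a b) := by
  obtain ⟨C, hC⟩ := isCompact_Icc.exists_bound_of_continuousOn hψ
  rw [uIoc_of_le hab, IntegrableOn, Measure.volume_eq_prod, ← Measure.prod_restrict]
  have hgi : Integrable g (volume.restrict (Ioc a b)) := hg.1
  have hψm : AEStronglyMeasurable ψ (volume.restrict (Ioc a b)) :=
    (hψ.mono Ioc_subset_Icc_self).aestronglyMeasurable measurableSet_Ioc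
  refine ((hgi.norm.mul_const C).comp_snd _).mono' ?_ ?_
  · exact (hgi.1.comp_snd.mul hψm.comp_fst).indicator
      (measurableSet_le measurable_snd measurable_fst)
  · have hmem : ∀ᵐ p ∂(volume.restrict (Ioc a b)).prod (volume.restrict (Ioc a b)),
        p ∈ Ioc a b ×ˢ Ioc a b := by
      rw [Measure.prod_restrict]
      exact ae_restrict_mem (measurableSet_Ioc.prod measurableSet_Ioc)
    filter_upwards [hmem] with p hp
    rw [Function.uncurry_apply_pair, norm_indicator_eq_indicator_norm]
    have hψp := hC _ (Ioc_subset_Icc_self hp.1)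
    refine indicator_apply_le' (fun _ => ?_)
      (fun _ => mul_nonneg (norm_nonneg _) ((norm_nonneg _).trans hψp))
    rw [norm_mul]
    exact mul_le_mul_of_nonneg_left hψp (norm_nonneg _)

theorem intervalIntegral.integral_primitive_mul {𝕜 : Type*} [RCLike 𝕜] {a b : ℝ} (hab : a ≤ b)
    {g ψ : ℝ → 𝕜} (hg : IntervalIntegrable g volume a b) (hψ : ContinuousOn ψ (Icc a b)) :
    ∫ x in a..b, (∫ t in a..x, g t) * ψ x = ∫ t in a..b, g t * ∫ x in t..b, ψ x := by
  set F : ℝ → ℝ → 𝕜 := fun x t => (Iic x).indicator (fun t => g t * ψ x) t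
  have hL : ∀ x ∈ uIcc a b, (∫ t in a..x, g t) * ψ x = ∫ t in a..b, F x t := by
    intro x hx
    rw [uIcc_of_le hab] at hx
    rw [← intervalIntegral.integral_mul_const]
    exact (intervalIntegral.integral_indicator hx).symm
  have hR : ∀ t ∈ uIoc a b, ∫ x in a..b, F x t = g t * ∫ x in t..b, ψ x := by
    intro t ht
    rw [uIoc_of_le hab] at ht
    rw [← intervalIntegral.integral_const_mul, ← intervalIntegral.integral_indicator_Ici ht]
    rfl
  rw [intervalIntegral.integral_congr hL,
    intervalIntegral_intervalIntegral_swap (integrableOn_uncurry_indicator_Iic_mul hab hg hψ)]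
  exact intervalIntegral.integral_congr_ae (ae_of_all _ hR)

theorem fourierCoeffOn_primitive {a b : ℝ} (hab : a < b) {g : ℝ → ℂ}
    (hg : IntervalIntegrable g volume a b) {n : ℤ} (hn : n ≠ 0) :
    fourierCoeffOn hab (fun x => ∫ t in a..x, g t) n = 1 / (-2 * π * Complex.I * n) *
      (fourier (-n) (a : AddCircle (b - a)) * (∫ t in a..b, g t) -
        (b - a) * fourierCoeffOn hab g n) := by
  have hT : Fact (0 < b - a) := ⟨sub_pos.2 hab⟩
  set e : ℝ → ℂ := fun x => fourier (-n) (x : AddCircle (b - a))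
  set c : ℂ := ((b - a : ℝ) : ℂ) / (-2 * π * Complex.I * n)
  have he : Continuous e := (map_continuous (fourier (-n))).comp (AddCircle.continuous_mk' _)
  have hperiod : e b = e a := by
    simp only [e]; congr 1; simpa using AddCircle.coe_add_period (b - a) a
  have hinner : ∀ t, ∫ x in t..b, e x = c * e b - c * e t := fun t =>
    intervalIntegral.integral_eq_sub_of_hasDerivAt
      (fun x _ => has_antideriv_at_fourier_neg hT hn x) (he.intervalIntegrable _ _)
  have hfubini : ∫ x in a..b, e x * ∫ t in a..x, g t =
      c * e a * (∫ t in a..b, g t) - c * ∫ t in a..b, g t * e t := by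
    simp_rw [mul_comm (e _), intervalIntegral.integral_primitive_mul hab.le hg he.continuousOn,
      hinner, hperiod, mul_sub, mul_left_comm _ c]
    rw [intervalIntegral.integral_sub ((hg.mul_const _).const_mul _)
        ((hg.mul_continuousOn he.continuousOn).const_mul _),
      intervalIntegral.integral_const_mul, intervalIntegral.integral_const_mul,
      intervalIntegral.integral_mul_const]
    ring
  rw [fourierCoeffOn_eq_integral, fourierCoeffOn_eq_integral]
  simp only [smul_eq_mul]
  change (1 / (b - a)) • ∫ x in a..b, e x * _ =
    _ * (_ - _ * ((1 / (b - a)) • ∫ x in a..b, e x * g x))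
  simp_rw [hfubini, mul_comm (g _) (e _), Complex.real_smul, c]
  have hba : (b : ℂ) - a ≠ 0 := sub_ne_zero.2 (Complex.ofReal_injective.ne hab.ne')
  have hn' : (-2 * π * Complex.I * n : ℂ) ≠ 0 := by simp [hn, pi_ne_zero, Complex.I_ne_zero]
  push_cast
  generalize (b : ℂ) - a = T at *
  field_simp
  ring

theorem sq_mul_norm_fourierCoeffOn_primitive_le {a b : ℝ} (hab : a < b) {g : ℝ → ℂ}
    (hg : IntervalIntegrable g volume a b) (hg0 : ∫ t in a..b, g t = 0) {n : ℤ} (hn : n ≠ 0) :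
    (2 * π / (b - a)) ^ 2 * ‖fourierCoeffOn hab (fun x => ∫ t in a..x, g t) n‖ ^ 2 ≤
      ‖fourierCoeffOn hab g n‖ ^ 2 := by
  have hba : 0 < b - a := sub_pos.2 hab
  have hn1 : (1 : ℝ) ≤ |(n : ℝ)| := by exact_mod_cast Int.one_le_abs hn
  have hnorm₁ : ‖1 / (-2 * π * Complex.I * n : ℂ)‖ = (2 * π * |(n : ℝ)|)⁻¹ := by
    simp [abs_of_pos pi_pos]
  have hnorm₂ : ‖(b : ℂ) - a‖ = b - a := by
    rw [← Complex.ofReal_sub, Complex.norm_real, Real.norm_of_nonneg hba.le]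
  rw [fourierCoeffOn_primitive hab hg hn, hg0, mul_zero, zero_sub, norm_mul, norm_neg, norm_mul,
    hnorm₁, hnorm₂]
  set c := ‖fourierCoeffOn hab g n‖
  calc (2 * π / (b - a)) ^ 2 * ((2 * π * |(n : ℝ)|)⁻¹ * ((b - a) * c)) ^ 2
      = c ^ 2 / |(n : ℝ)| ^ 2 := by field_simp
    _ ≤ c ^ 2 := div_le_self (sq_nonneg c) (one_le_pow₀ hn1)

theorem wirtinger_primitive {a b : ℝ} (hab : a < b) {g : ℝ → ℝ}
    (hg : MemLp g 2 (volume.restrict (Ioc a b))) (hg0 : ∫ x in a..b, g x = 0) :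
    (2 * π / (b - a)) ^ 2 * ((∫ x in a..b, (∫ t in a..x, g t) ^ 2) -
      (∫ x in a..b, ∫ t in a..x, g t) ^ 2 / (b - a)) ≤ ∫ x in a..b, g x ^ 2 := by
  set U : ℝ → ℝ := fun x => ∫ t in a..x, g t
  set ω := 2 * π / (b - a)
  have hba : 0 < b - a := sub_pos.2 hab
  have hG : MemLp (fun t => (g t : ℂ)) 2 (volume.restrict (Ioc a b)) := hg.ofReal
  have hgi : IntervalIntegrable g volume a b :=
    (intervalIntegrable_iff_integrableOn_Ioc_of_le hab.le).2 (hg.integrable one_le_two)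
  have hGi : IntervalIntegrable (fun t => (g t : ℂ)) volume a b :=
    (intervalIntegrable_iff_integrableOn_Ioc_of_le hab.le).2 (hG.integrable one_le_two)
  have hUC : (fun x => ∫ t in a..x, (g t : ℂ)) = fun x => (U x : ℂ) :=
    funext fun x => intervalIntegral.integral_ofReal
  have hUcont : ContinuousOn U (Icc a b) := by
    rw [← uIcc_of_le hab.le]
    exact intervalIntegral.continuousOn_primitive_interval' hgi left_mem_uIcc
  have hUL2 : MemLp (fun x => (U x : ℂ)) 2 (volume.restrict (Ioc a b)) :=
    ((Complex.continuous_ofReal.comp_continuousOn hUcont).memLp_restrict_of_isCompact isCompact_Icc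
      measurableSet_Icc 2).mono_measure (Measure.restrict_mono Ioc_subset_Icc_self le_rfl)
  have hparU := hasSum_sq_fourierCoeffOn hab hUL2
  have hparG := hasSum_sq_fourierCoeffOn hab hG
  simp only [Complex.norm_real, Real.norm_eq_abs, sq_abs, smul_eq_mul] at hparU hparG
  have hcoeff0 : fourierCoeffOn hab (fun x => (U x : ℂ)) 0 =
      ((b - a)⁻¹ * ∫ x in a..b, U x : ℝ) := by
    simp [fourierCoeffOn_eq_integral, intervalIntegral.integral_ofReal]
  set c := fun n => ‖fourierCoeffOn hab (fun x => (U x : ℂ)) n‖ ^ 2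
  have hterm : ∀ n : ℤ, ω ^ 2 * c n - (if n = 0 then ω ^ 2 * c 0 else 0) ≤
      ‖fourierCoeffOn hab (fun t => (g t : ℂ)) n‖ ^ 2 := by
    intro n
    by_cases hn : n = 0
    · subst hn; simp
    · simpa only [hn, if_false, sub_zero, c, hUC] using
        sq_mul_norm_fourierCoeffOn_primitive_le hab hGi
          (by rw [intervalIntegral.integral_ofReal, hg0, Complex.ofReal_zero]) hn
  have hle := hasSum_le hterm ((hparU.mul_left (ω ^ 2)).sub (hasSum_ite_eq 0 (ω ^ 2 * c 0))) hparG
  simp only [c, hcoeff0, Complex.norm_real, Real.norm_eq_abs, sq_abs] at hle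
  have hmul := mul_le_mul_of_nonneg_left hle hba.le
  calc ω ^ 2 * ((∫ x in a..b, U x ^ 2) - (∫ x in a..b, U x) ^ 2 / (b - a))
      = (b - a) * (ω ^ 2 * ((b - a)⁻¹ * ∫ x in a..b, U x ^ 2) -
          ω ^ 2 * ((b - a)⁻¹ * ∫ x in a..b, U x) ^ 2) := by field_simp
    _ ≤ ∫ x in a..b, g x ^ 2 := by rwa [mul_inv_cancel_left₀ hba.ne'] at hmul

theorem qfun_one (α : ℝ) (u g : ℝ → ℝ) :
    Qfun α 1 u g = ((∫ x in (-1 : ℝ)..1, g x ^ 2) + α * (∫ x in (-1 : ℝ)..1, u x) ^ 2) /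
      ∫ x in (-1 : ℝ)..1, u x ^ 2 := by
  simp only [Qfun, sub_self, rpow_zero, one_mul, div_one]
  rw [show (2 : ℝ) = (2 : ℕ) by norm_num, rpow_natCast, sq_abs]

namespace IsH10

variable {u g : ℝ → ℝ}

theorem continuousOn (h : IsH10 u g) : ContinuousOn u (Icc (-1) 1) := by
  rw [← uIcc_of_le (by norm_num : (-1 : ℝ) ≤ 1)]
  exact (intervalIntegral.continuousOn_primitive_interval' h.1 left_mem_uIcc).congr
    (by rw [uIcc_of_le (by norm_num)]; exact h.2.2.1)

theorem integral_sq_pos (h : IsH10 u g) (hu : Nontriv u) : 0 < ∫ x in (-1 : ℝ)..1, u x ^ 2 := by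
  obtain ⟨x₀, hx₀, hne⟩ := hu
  exact intervalIntegral.integral_pos (by norm_num) (h.continuousOn.pow 2)
    (fun _ _ => sq_nonneg _) ⟨x₀, hx₀, by positivity⟩

theorem pi_sq_mul_integral_sq_le (h : IsH10 u g) :
    π ^ 2 * ∫ x in (-1 : ℝ)..1, u x ^ 2 ≤
      (∫ x in (-1 : ℝ)..1, g x ^ 2) + π ^ 2 / 2 * (∫ x in (-1 : ℝ)..1, u x) ^ 2 := by
  obtain ⟨-, hg2, hprim, hu1⟩ := h
  have hg0 : ∫ x in (-1 : ℝ)..1, g x = 0 := by rw [← hprim 1 (by norm_num), hu1]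
  rw [Measure.restrict_congr_set Ioo_ae_eq_Ioc] at hg2
  have hu : EqOn u (fun x => ∫ t in (-1 : ℝ)..x, g t) (uIcc (-1) 1) := by
    rw [uIcc_of_le (by norm_num)]; exact hprim
  have hW := wirtinger_primitive (by norm_num) hg2 hg0
  rw [← intervalIntegral.integral_congr hu,
    ← intervalIntegral.integral_congr fun x hx => congrArg (· ^ 2) (hu hx),
    show 2 * π / (1 - -1) = π by ring] at hW
  linarith

end IsH10

theorem pi_sq_le_qfun {u g : ℝ → ℝ} (h : IsH10 u g) (hu : Nontriv u) :
    π ^ 2 ≤ Qfun (π ^ 2 / 2) 1 u g := by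
  rw [qfun_one, le_div_iff₀ (h.integral_sq_pos hu)]
  exact h.pi_sq_mul_integral_sq_le

theorem integral_trig_mul_trig (c₀ c₁ c₂ d₀ d₁ d₂ : ℝ) :
    ∫ x in (-1 : ℝ)..1, (c₀ + c₁ * cos (π * x) + c₂ * sin (π * x)) *
      (d₀ + d₁ * cos (π * x) + d₂ * sin (π * x)) = 2 * c₀ * d₀ + c₁ * d₁ + c₂ * d₂ := by
  have hexpand : ∀ x, (c₀ + c₁ * cos x + c₂ * sin x) * (d₀ + d₁ * cos x + d₂ * sin x) =
      c₀ * d₀ + (c₀ * d₁ + c₁ * d₀) * cos x + (c₀ * d₂ + c₂ * d₀) * sin x + c₁ * d₁ * cos x ^ 2 +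
        c₂ * d₂ * sin x ^ 2 + (c₁ * d₂ + c₂ * d₁) * (sin x * cos x) := fun x => by ring
  rw [intervalIntegral.integral_comp_mul_left (fun x => (c₀ + c₁ * cos x + c₂ * sin x) *
      (d₀ + d₁ * cos x + d₂ * sin x)) pi_ne_zero]
  simp only [hexpand]
  rw [intervalIntegral.integral_add, intervalIntegral.integral_add, intervalIntegral.integral_add,
    intervalIntegral.integral_add, intervalIntegral.integral_add]
  · simp only [intervalIntegral.integral_const_mul, intervalIntegral.integral_const, integral_cos,
      integral_sin, integral_cos_sq, integral_sin_sq, integral_sin_mul_cos₁, smul_eq_mul, mul_one,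
      mul_neg, sin_neg, cos_neg, sin_pi, cos_pi]
    field_simp
    ring
  all_goals exact Continuous.intervalIntegrable (by fun_prop) _ _

theorem yA_eq_trig (A x : ℝ) :
    yA A x = A / 2 + A / 2 * cos (π * x) + -√(1 - A) * sin (π * x) := by
  unfold yA; ring

theorem gA_eq_trig (A x : ℝ) :
    gA A x = 0 + -(√(1 - A) * π) * cos (π * x) + -(A / 2 * π) * sin (π * x) := by
  unfold gA; ring

theorem hasDerivAt_yA (A x : ℝ) : HasDerivAt (yA A) (gA A x) x := by
  have hlin := (hasDerivAt_id' x).const_mul π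
  have h := ((hlin.cos.const_add 1).const_mul (A / 2)).sub (hlin.sin.const_mul √(1 - A))
  exact h.congr_deriv (by unfold gA; ring)

theorem continuous_gA (A : ℝ) : Continuous (gA A) := by
  unfold gA; fun_prop

theorem isH10_yA (A : ℝ) : IsH10 (yA A) (gA A) := by
  have hL2 : MemLp (gA A) 2 (volume.restrict (Icc (-1) 1)) :=
    (continuous_gA A).continuousOn.memLp_restrict_of_isCompact isCompact_Icc measurableSet_Icc 2
  refine ⟨(continuous_gA A).intervalIntegrable _ _,
    hL2.mono_measure (Measure.restrict_mono Ioo_subset_Icc_self le_rfl), fun x _ => ?_,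
    by simp [yA]⟩
  rw [intervalIntegral.integral_eq_sub_of_hasDerivAt (fun t _ => hasDerivAt_yA A t)
    ((continuous_gA A).intervalIntegrable _ _)]
  simp [yA]

theorem nontriv_yA {A : ℝ} (hA : 0 ≤ A) : Nontriv (yA A) := by
  refine ⟨-(1 / 2), by norm_num, ne_of_gt ?_⟩
  have hval : yA A (-(1 / 2)) = A / 2 + √(1 - A) := by
    unfold yA
    rw [show π * -(1 / 2) = -(π / 2) by ring, cos_neg, sin_neg, cos_pi_div_two, sin_pi_div_two]
    ring
  rw [hval]
  rcases hA.eq_or_lt with rfl | hA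
  · simp
  · positivity

theorem integral_yA (A : ℝ) : ∫ x in (-1 : ℝ)..1, yA A x = A := by
  have h := integral_trig_mul_trig (A / 2) (A / 2) (-√(1 - A)) 1 0 0
  simp only [← yA_eq_trig, mul_zero, zero_mul, add_zero, mul_one] at h
  rw [h]; ring

theorem qfun_yA {A : ℝ} (hA : A ≤ 1) : Qfun (π ^ 2 / 2) 1 (yA A) (gA A) = π ^ 2 := by
  have hB : √(1 - A) ^ 2 = 1 - A := sq_sqrt (by linarith)
  have hy2 := integral_trig_mul_trig (A / 2) (A / 2) (-√(1 - A)) (A / 2) (A / 2) (-√(1 - A))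
  have hg2 := integral_trig_mul_trig 0 (-(√(1 - A) * π)) (-(A / 2 * π)) 0 (-(√(1 - A) * π))
    (-(A / 2 * π))
  simp only [← yA_eq_trig, ← gA_eq_trig, ← sq] at hy2 hg2
  have hden : (0 : ℝ) < 3 * A ^ 2 / 4 + 1 - A := by nlinarith [sq_nonneg (A - 2 / 3)]
  rw [qfun_one, integral_yA, hy2, hg2, div_eq_iff (by nlinarith)]
  nlinarith

theorem lam_pi_sq_div_two_one : lam (π ^ 2 / 2) 1 = π ^ 2 := by
  refine IsLeast.csInf_eq ⟨⟨yA 1, gA 1, isH10_yA 1, nontriv_yA zero_le_one, qfun_yA le_rfl⟩, ?_⟩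
  rintro _ ⟨u, g, h, hu, rfl⟩
  exact pi_sq_le_qfun h hu

theorem yA_eq_cos_mul (A x : ℝ) :
    yA A x = cos (π * x / 2) * (A * cos (π * x / 2) - 2 * √(1 - A) * sin (π * x / 2)) := by
  set θ := π * x / 2
  have hθ : π * x = 2 * θ := by ring
  unfold yA
  rw [hθ, cos_two_mul, sin_two_mul]
  ring

theorem cos_pi_mul_div_two_pos {x : ℝ} (hx : x ∈ Ioo (-1 : ℝ) 1) : 0 < cos (π * x / 2) :=
  cos_pos_of_mem_Ioo ⟨by nlinarith [pi_pos, hx.1], by nlinarith [pi_pos, hx.2]⟩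

theorem yA_one_pos {x : ℝ} (hx : x ∈ Ioo (-1 : ℝ) 1) : 0 < yA 1 x := by
  have hcos := cos_pi_mul_div_two_pos hx
  rw [yA_eq_cos_mul, sub_self, sqrt_zero]
  simp only [one_mul, zero_mul, mul_zero, sub_zero]
  positivity

theorem exists_sign_change_yA {A : ℝ} (hA : A ∈ Ioo (0 : ℝ) 1) :
    ∃ x₀ ∈ Ioo (-1 : ℝ) 1, x₀ ≠ 0 ∧ yA A x₀ = 0 ∧ (∃ a ∈ Ioo (-1 : ℝ) 1, 0 < yA A a) ∧
      ∃ b ∈ Ioo (-1 : ℝ) 1, yA A b < 0 := by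
  obtain ⟨hA0, hA1⟩ := hA
  have hB : 0 < √(1 - A) := sqrt_pos.2 (by linarith)
  set f : ℝ → ℝ := fun x => A * cos (π * x / 2) - 2 * √(1 - A) * sin (π * x / 2)
  have hf : Continuous f := by fun_prop
  have hsign : (0 : ℝ) ∈ Ioo (f 1) (f 0) := by
    simp only [f, mul_one, mul_zero, zero_div, cos_pi_div_two, sin_pi_div_two, cos_zero, sin_zero]
    constructor <;> linarith
  obtain ⟨x₀, ⟨hx₀0, hx₀1⟩, hfx₀⟩ := intermediate_value_Ioo' zero_le_one hf.continuousOn hsign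
  obtain ⟨b, hx₀b, hb1⟩ := exists_between hx₀1
  have hπx₀ := mul_pos pi_pos hx₀0
  have hπx₀b := mul_lt_mul_of_pos_left hx₀b pi_pos
  have hπb := mul_lt_mul_of_pos_left hb1 pi_pos
  have hcos : cos (π * b / 2) < cos (π * x₀ / 2) :=
    cos_lt_cos_of_nonneg_of_le_pi (by linarith) (by linarith) (by linarith)
  have hsin : sin (π * x₀ / 2) < sin (π * b / 2) :=
    sin_lt_sin_of_lt_of_le_pi_div_two (by linarith) (by linarith) (by linarith)
  have hfb : f b < 0 := by
    have : f b < f x₀ := by simp only [f]; nlinarith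
    rwa [hfx₀] at this
  refine ⟨x₀, ⟨by linarith, hx₀1⟩, hx₀0.ne', ?_, ⟨0, by norm_num, ?_⟩,
    ⟨b, ⟨by linarith, hb1⟩, ?_⟩⟩
  · rw [yA_eq_cos_mul]
    exact mul_eq_zero_of_right _ hfx₀
  · simpa [yA] using hA0
  · rw [yA_eq_cos_mul]
    exact mul_neg_of_pos_of_neg (cos_pi_mul_div_two_pos ⟨by linarith, hb1⟩) hfb

/-- For `q = 1` and `α = π²/2`, each `y_A`, `A ∈ [0,1]`, is a minimizer of
`λ(π²/2,1) = π²` with `∫ y_A = A`; in particular there is a positive minimizer (`A = 1`),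
and for `A ∈ (0,1)` a minimizer changing sign at a point `x̄ ≠ 0` with nonzero average. -/
theorem statement3 :
    lam (π ^ 2 / 2) 1 = π ^ 2 ∧
    (∀ A ∈ Set.Icc (0 : ℝ) 1,
      IsMinimizer (π ^ 2 / 2) 1 (yA A) (gA A) ∧ (∫ x in (-1 : ℝ)..1, yA A x) = A) ∧
    (∀ x ∈ Set.Ioo (-1 : ℝ) 1, 0 < yA 1 x) ∧
    (∀ A ∈ Set.Ioo (0 : ℝ) 1,
      ∃ x₀ ∈ Set.Ioo (-1 : ℝ) 1, x₀ ≠ 0 ∧ yA A x₀ = 0 ∧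
        (∃ a ∈ Set.Ioo (-1 : ℝ) 1, 0 < yA A a) ∧
        (∃ b ∈ Set.Ioo (-1 : ℝ) 1, yA A b < 0) ∧
        (∫ x in (-1 : ℝ)..1, yA A x) ≠ 0) := by
  refine ⟨lam_pi_sq_div_two_one, fun A hA => ⟨⟨isH10_yA A, nontriv_yA hA.1, ?_⟩, integral_yA A⟩,
    fun x hx => yA_one_pos hx, fun A hA => ?_⟩
  · rw [qfun_yA hA.2, lam_pi_sq_div_two_one]
  · obtain ⟨x₀, hx₀, hne, hzero, hpos, hneg⟩ := exists_sign_change_yA hA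
    exact ⟨x₀, hx₀, hne, hzero, hpos, hneg, by rw [integral_yA]; exact hA.1.ne'⟩
end
end

section
/- For every m ∈ [0,1] and q ∈ [1,2] one has H(m,q) ≥ H(m,1) = π. Moreover H(m,1) = π for every m ∈ [0,1], and if m < 1 and q > 1 then the inequality is strict: H(m,q) > π. Consequently, if q ∈ (1,2] and H(m,q) = π, then necessarily m = 1. -/
/-!
The reflection `y ↦ 1 - m - y` preserves `(-m, 1)`, so `2 H(m,q)` is the integral of
`D(y)^{-1/2} + D(1-m-y)^{-1/2}`, where `D` is the radicand of `H(m,q)`. A two-point majorization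
inequality for the convex function `t ↦ t^q` gives `|u|^{q-1}u + |v|^{q-1}v ≤ 1 - m^q` whenever
`u, v ≥ -m` and `u + v = 1 - m`; since `z(m,q) (1 + m^q) = 1 - m²`, this yields
`D(y) + D(1-m-y) ≤ 2(1-y)(y+m)`, the right side being twice the radicand of `H(m,1)`. Convexity
and monotonicity of `t ↦ t^{-1/2}` then bound the symmetrized integrand below by twice that of
`H(m,1)`, and `H(m,1) = π` by the substitution `y = (1-m)/2 + (1+m)/2 · sin θ`. For `m < 1 < q`
every inequality is strict.
-/

open MeasureTheory Real
open scoped ENNReal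

noncomputable section

/-- `z(m,q) = (1-m²)/(1+m^q)`. -/
def zmq (m q : ℝ) : ℝ := (1 - m ^ 2) / (1 + m ^ q)

/-- `H(m,q) = ∫_{-m}^1 (1 - z(m,q)(1-|y|^{q-1}y) - y²)^{-1/2} dy`, computed as a
(possibly infinite) integral of a nonnegative integrand, so that `H(0,2) = +∞`. -/
def Hmq (m q : ℝ) : ℝ≥0∞ :=
  ∫⁻ y in Set.Ioo (-m) (1 : ℝ),
    (ENNReal.ofReal (Real.sqrt (1 - zmq m q * (1 - |y| ^ (q - 1) * y) - y ^ 2)))⁻¹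

open Set

theorem ConvexOn.map_add_map_le_of_add_eq {s : Set ℝ} {f : ℝ → ℝ} {a b c d : ℝ}
    (hf : ConvexOn ℝ s f) (hc : c ∈ s) (hd : d ∈ s) (hca : c ≤ a) (hcb : c ≤ b)
    (habcd : a + b = c + d) : f a + f b ≤ f c + f d := by
  obtain hcd | hcd := (show c ≤ d by linarith).eq_or_lt
  · obtain rfl : a = c := by linarith
    obtain rfl : b = a := by linarith
    rw [hcd]
  set θ := (d - a) / (d - c)
  have hθ : θ * (d - c) = d - a := div_mul_cancel₀ _ (sub_pos.2 hcd).ne'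
  have hθ0 : 0 ≤ θ := div_nonneg (by linarith) (by linarith)
  have hθ1 : 0 ≤ 1 - θ := by
    rw [sub_nonneg, div_le_one (by linarith)]; linarith
  have ha := hf.2 hc hd hθ0 hθ1 (by ring)
  have hb := hf.2 hc hd hθ1 hθ0 (by ring)
  simp only [smul_eq_mul] at ha hb
  clear_value θ
  rw [show a = θ * c + (1 - θ) * d by linear_combination hθ,
    show b = (1 - θ) * c + θ * d by linear_combination habcd - hθ]
  linarith

theorem StrictConvexOn.map_add_map_lt_of_add_eq {s : Set ℝ} {f : ℝ → ℝ} {a b c d : ℝ}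
    (hf : StrictConvexOn ℝ s f) (hc : c ∈ s) (hd : d ∈ s) (hca : c < a) (hcb : c < b)
    (habcd : a + b = c + d) : f a + f b < f c + f d := by
  set θ := (d - a) / (d - c)
  have hθ : θ * (d - c) = d - a := div_mul_cancel₀ _ (by linarith)
  have hθ0 : 0 < θ := div_pos (by linarith) (by linarith)
  have hθ1 : 0 < 1 - θ := by
    rw [sub_pos, div_lt_one (by linarith)]; linarith
  have ha := hf.2 hc hd (by linarith) hθ0 hθ1 (by ring)
  have hb := hf.2 hc hd (by linarith) hθ1 hθ0 (by ring)
  simp only [smul_eq_mul] at ha hb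
  clear_value θ
  rw [show a = θ * c + (1 - θ) * d by linear_combination hθ,
    show b = (1 - θ) * c + θ * d by linear_combination habcd - hθ]
  linarith

theorem abs_rpow_sub_one_mul_of_nonneg {q t : ℝ} (hq : q ≠ 0) (ht : 0 ≤ t) :
    |t| ^ (q - 1) * t = t ^ q := by
  obtain rfl | ht := ht.eq_or_lt
  · simp [zero_rpow hq]
  · rw [abs_of_pos ht, rpow_sub_one ht.ne', div_mul_cancel₀ _ ht.ne']

theorem abs_rpow_sub_one_mul_of_nonpos {q t : ℝ} (hq : q ≠ 0) (ht : t ≤ 0) :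
    |t| ^ (q - 1) * t = -(-t) ^ q := by
  rw [← abs_rpow_sub_one_mul_of_nonneg hq (neg_nonneg.2 ht), abs_neg, mul_neg, neg_neg]

theorem abs_rpow_sub_one_mul_add_le {m q u v : ℝ} (hq : 1 ≤ q) (hm0 : 0 ≤ m) (hm1 : m ≤ 1)
    (hu : -m ≤ u) (hv : -m ≤ v) (huv : u + v = 1 - m) :
    |u| ^ (q - 1) * u + |v| ^ (q - 1) * v ≤ 1 - m ^ q := by
  wlog h : u ≤ v generalizing u v
  · rw [add_comm]; exact this hv hu (by linarith) (by linarith)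
  have hq0 : q ≠ 0 := by positivity
  have hv0 : 0 ≤ v := by linarith
  rw [abs_rpow_sub_one_mul_of_nonneg hq0 hv0]
  rcases le_or_gt 0 u with hu0 | hu0
  · rw [abs_rpow_sub_one_mul_of_nonneg hq0 hu0]
    calc u ^ q + v ^ q ≤ (u + v) ^ q := add_rpow_le_rpow_add hu0 hv0 hq
      _ ≤ u + v := rpow_le_self_of_le_one (by linarith) (by linarith) hq
      _ ≤ 1 - m ^ q := by linarith [rpow_le_self_of_le_one hm0 hm1 hq]
  · rw [abs_rpow_sub_one_mul_of_nonpos hq0 hu0.le]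
    have := (convexOn_rpow hq).map_add_map_le_of_add_eq (a := v) (b := m) (c := -u) (d := 1)
      (mem_Ici.2 (by linarith)) (mem_Ici.2 zero_le_one) (by linarith) (by linarith) (by linarith)
    rw [one_rpow] at this
    linarith

theorem abs_rpow_sub_one_mul_add_lt {m q u v : ℝ} (hq : 1 < q) (hm0 : 0 ≤ m) (hm1 : m < 1)
    (hu : -m < u) (hv : -m < v) (huv : u + v = 1 - m) :
    |u| ^ (q - 1) * u + |v| ^ (q - 1) * v < 1 - m ^ q := by
  wlog h : u ≤ v generalizing u v
  · rw [add_comm]; exact this hv hu (by linarith) (by linarith)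
  have hq0 : q ≠ 0 := by positivity
  have hv0 : 0 < v := by linarith
  rw [abs_rpow_sub_one_mul_of_nonneg hq0 hv0.le]
  rcases lt_trichotomy u 0 with hu0 | rfl | hu0
  · rw [abs_rpow_sub_one_mul_of_nonpos hq0 hu0.le]
    have := (strictConvexOn_rpow hq).map_add_map_lt_of_add_eq (a := v) (b := m) (c := -u)
      (d := 1) (mem_Ici.2 (by linarith)) (mem_Ici.2 zero_le_one) (by linarith) (by linarith)
      (by linarith)
    rw [one_rpow] at this
    linarith
  · have hmq : m ^ q < m := rpow_lt_self_of_lt_one (by linarith) hm1 hq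
    have hvq : v ^ q ≤ v := rpow_le_self_of_le_one hv0.le (by linarith) hq.le
    simp only [abs_zero, mul_zero, zero_add]
    linarith
  · rw [abs_rpow_sub_one_mul_of_nonneg hq0 hu0.le]
    have := (strictConvexOn_rpow hq).map_add_map_lt_of_add_eq (a := u) (b := v) (c := 0)
      (d := u + v) self_mem_Ici (mem_Ici.2 (by linarith)) hu0 hv0 (by ring)
    rw [zero_rpow hq0] at this
    linarith [rpow_le_self_of_le_one (by linarith : 0 ≤ u + v) (by linarith) hq.le,
      rpow_le_self_of_le_one hm0 hm1.le hq.le]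

def radicand (m q y : ℝ) : ℝ := 1 - zmq m q * (1 - |y| ^ (q - 1) * y) - y ^ 2

def invSqrt (x : ℝ) : ℝ≥0∞ := (ENNReal.ofReal √x)⁻¹

theorem Hmq_eq (m q : ℝ) : Hmq m q = ∫⁻ y in Ioo (-m) 1, invSqrt (radicand m q y) := rfl

theorem radicand_one {m : ℝ} (hm : m ≠ -1) (y : ℝ) : radicand m 1 y = (1 - y) * (y + m) := by
  have : 1 + m ≠ 0 := fun h => hm (by linarith)
  rw [radicand, zmq, rpow_one, sub_self, rpow_zero, one_mul]
  field_simp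
  ring

theorem radicand_add_le {m q u v : ℝ} (hq : 1 ≤ q) (hm0 : 0 ≤ m) (hm1 : m ≤ 1)
    (hu : -m ≤ u) (hv : -m ≤ v) (huv : u + v = 1 - m) :
    radicand m q u + radicand m q v ≤ 2 * ((1 - u) * (u + m)) := by
  have hz : zmq m q * (1 + m ^ q) = 1 - m ^ 2 := div_mul_cancel₀ _ (by positivity)
  have hz0 : 0 ≤ zmq m q := div_nonneg (by nlinarith) (by positivity)
  have := mul_le_mul_of_nonneg_left
    (show 1 + m ^ q ≤ 2 - (|u| ^ (q - 1) * u + |v| ^ (q - 1) * v) by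
      linarith [abs_rpow_sub_one_mul_add_le hq hm0 hm1 hu hv huv]) hz0
  obtain rfl : v = 1 - m - u := by linarith
  unfold radicand
  linarith

theorem radicand_add_lt {m q u v : ℝ} (hq : 1 < q) (hm0 : 0 ≤ m) (hm1 : m < 1)
    (hu : -m < u) (hv : -m < v) (huv : u + v = 1 - m) :
    radicand m q u + radicand m q v < 2 * ((1 - u) * (u + m)) := by
  have hz : zmq m q * (1 + m ^ q) = 1 - m ^ 2 := div_mul_cancel₀ _ (by positivity)
  have hz0 : 0 < zmq m q := div_pos (by nlinarith) (by positivity)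
  have := mul_lt_mul_of_pos_left
    (show 1 + m ^ q < 2 - (|u| ^ (q - 1) * u + |v| ^ (q - 1) * v) by
      linarith [abs_rpow_sub_one_mul_add_lt hq hm0 hm1 hu hv huv]) hz0
  obtain rfl : v = 1 - m - u := by linarith
  unfold radicand
  linarith

theorem two_mul_inv_sqrt_le_add {a b c : ℝ} (ha : 0 < a) (hb : 0 < b) (h : a + b ≤ 2 * c) :
    2 * (√c)⁻¹ ≤ (√a)⁻¹ + (√b)⁻¹ := by
  have hu := sqrt_pos.2 ha
  have hv := sqrt_pos.2 hb
  have hw := sqrt_pos.2 (by linarith : 0 < c)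
  have hsum : √a + √b ≤ 2 * √c := by
    refine (pow_le_pow_iff_left₀ (by positivity) (by positivity) two_ne_zero).1 ?_
    nlinarith [sq_sqrt ha.le, sq_sqrt hb.le, sq_sqrt (by linarith : 0 ≤ c),
      sq_nonneg (√a - √b)]
  rw [inv_add_inv hu.ne' hv.ne', ← div_eq_mul_inv, div_le_div_iff₀ hw (by positivity)]
  nlinarith [mul_le_mul_of_nonneg_left hsum (by positivity : 0 ≤ √a + √b),
    sq_nonneg (√a - √b)]

theorem invSqrt_of_nonpos {x : ℝ} (hx : x ≤ 0) : invSqrt x = ∞ := by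
  simp [invSqrt, sqrt_eq_zero'.2 hx]

theorem invSqrt_of_pos {x : ℝ} (hx : 0 < x) : invSqrt x = ENNReal.ofReal (√x)⁻¹ :=
  (ENNReal.ofReal_inv_of_pos (sqrt_pos.2 hx)).symm

theorem invSqrt_lt_invSqrt {x y : ℝ} (hx : 0 < x) (hxy : x < y) : invSqrt y < invSqrt x := by
  rw [invSqrt, invSqrt, ENNReal.inv_lt_inv,
    ENNReal.ofReal_lt_ofReal_iff (sqrt_pos.2 (hx.trans hxy))]
  exact sqrt_lt_sqrt hx.le hxy

theorem two_mul_invSqrt_le_add {a b c : ℝ} (hc : 0 < c) (h : a + b ≤ 2 * c) :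
    2 * invSqrt c ≤ invSqrt a + invSqrt b := by
  rcases le_or_gt a 0 with ha | ha
  · simp [invSqrt_of_nonpos ha]
  rcases le_or_gt b 0 with hb | hb
  · simp [invSqrt_of_nonpos hb]
  rw [invSqrt_of_pos ha, invSqrt_of_pos hb, invSqrt_of_pos hc, ← ENNReal.ofReal_ofNat 2,
    ← ENNReal.ofReal_mul zero_le_two, ← ENNReal.ofReal_add (by positivity) (by positivity)]
  exact ENNReal.ofReal_le_ofReal (two_mul_inv_sqrt_le_add ha hb h)

theorem two_mul_invSqrt_lt_add {a b c : ℝ} (hc : 0 < c) (h : a + b < 2 * c) :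
    2 * invSqrt c < invSqrt a + invSqrt b := by
  rcases le_or_gt (a + b) 0 with hab | hab
  · have hc_top : 2 * invSqrt c < ∞ := by
      rw [invSqrt_of_pos hc]; exact ENNReal.mul_lt_top (by simp) ENNReal.ofReal_lt_top
    rcases le_or_gt a 0 with ha | ha
    · simpa [invSqrt_of_nonpos ha] using hc_top
    · simpa [invSqrt_of_nonpos (by linarith : b ≤ 0)] using hc_top
  calc 2 * invSqrt c < 2 * invSqrt ((a + b) / 2) := by
        gcongr
        · simp
        · exact invSqrt_lt_invSqrt (by positivity) (by linarith)
    _ ≤ invSqrt a + invSqrt b := two_mul_invSqrt_le_add (by positivity) (by linarith)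

theorem measurable_invSqrt_radicand (m q : ℝ) : Measurable fun y => invSqrt (radicand m q y) := by
  unfold invSqrt radicand
  fun_prop

theorem setLIntegral_Ioo_comp_reflect (a b : ℝ) (f : ℝ → ℝ≥0∞) :
    ∫⁻ y in Ioo a b, f (a + b - y) = ∫⁻ y in Ioo a b, f y := by
  have himg : (a + b - ·) '' Ioo a b = Ioo a b := by
    rw [image_const_sub_Ioo]; congr 1 <;> ring
  conv_rhs => rw [← himg]
  rw [lintegral_image_eq_lintegral_abs_deriv_mul measurableSet_Ioo
    (fun y _ => ((hasDerivAt_id' y).const_sub (a + b)).hasDerivWithinAt)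
    (sub_right_injective.injOn)]
  simp

theorem setLIntegral_Ioo_add_reflect {a b : ℝ} {f : ℝ → ℝ≥0∞} (hf : Measurable f) :
    ∫⁻ y in Ioo a b, (f y + f (a + b - y)) = 2 * ∫⁻ y in Ioo a b, f y := by
  rw [lintegral_add_left hf, setLIntegral_Ioo_comp_reflect, two_mul]

theorem setLIntegral_Ioo_le_of_two_mul_le_add_reflect {a b : ℝ} {f g : ℝ → ℝ≥0∞}
    (hf : Measurable f) (h : ∀ y ∈ Ioo a b, 2 * g y ≤ f y + f (a + b - y)) :
    ∫⁻ y in Ioo a b, g y ≤ ∫⁻ y in Ioo a b, f y := by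
  refine (ENNReal.mul_le_mul_iff_right two_ne_zero ENNReal.ofNat_ne_top).1 ?_
  rw [← lintegral_const_mul' _ _ ENNReal.ofNat_ne_top, ← setLIntegral_Ioo_add_reflect hf]
  exact setLIntegral_mono (by fun_prop) h

theorem setLIntegral_Ioo_lt_of_two_mul_lt_add_reflect {a b : ℝ} {f g : ℝ → ℝ≥0∞}
    (hab : a < b) (hf : Measurable f) (hg : ∫⁻ y in Ioo a b, g y ≠ ∞)
    (h : ∀ y ∈ Ioo a b, 2 * g y < f y + f (a + b - y)) :
    ∫⁻ y in Ioo a b, g y < ∫⁻ y in Ioo a b, f y := by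
  refine (ENNReal.mul_lt_mul_iff_right two_ne_zero ENNReal.ofNat_ne_top).1 ?_
  rw [← lintegral_const_mul' _ _ ENNReal.ofNat_ne_top, ← setLIntegral_Ioo_add_reflect hf]
  refine setLIntegral_strict_mono measurableSet_Ioo (by simp [hab]) (by fun_prop) ?_
    (ae_of_all _ h)
  rw [lintegral_const_mul' _ _ ENNReal.ofNat_ne_top]
  exact ENNReal.mul_ne_top ENNReal.ofNat_ne_top hg

theorem setLIntegral_Ioo_invSqrt_sub_mul_sub {a b : ℝ} (hab : a < b) :
    ∫⁻ y in Ioo a b, invSqrt ((b - y) * (y - a)) = ENNReal.ofReal π := by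
  set r := (b - a) / 2
  have hr : 0 < r := by simp only [r]; linarith
  set φ : ℝ → ℝ := fun θ => r * sin θ + (a + b) / 2
  have hφ : StrictMonoOn φ (Icc (-(π / 2)) (π / 2)) :=
    ((strictMono_mul_left_of_pos hr).add_const _).comp_strictMonoOn strictMonoOn_sin
  have himg : φ '' Ioo (-(π / 2)) (π / 2) = Ioo a b := by
    rw [ContinuousOn.image_Ioo_of_strictMonoOn (by linarith [pi_pos]) (by fun_prop) hφ]
    simp only [φ, sin_neg, sin_pi_div_two, r]
    congr 1 <;> ring
  have hjac : ∀ θ ∈ Ioo (-(π / 2)) (π / 2),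
      ENNReal.ofReal |r * cos θ| * invSqrt ((b - φ θ) * (φ θ - a)) = 1 := by
    intro θ hθ
    have hcos := cos_pos_of_mem_Ioo hθ
    have : (b - φ θ) * (φ θ - a) = (r * cos θ) ^ 2 := by
      simp only [φ, r]
      linear_combination (-((b - a) / 2) ^ 2) * sin_sq_add_cos_sq θ
    rw [this, invSqrt, sqrt_sq (by positivity), abs_of_pos (by positivity)]
    exact ENNReal.mul_inv_cancel (by simp [hr, hcos]) ENNReal.ofReal_ne_top
  rw [← himg, lintegral_image_eq_lintegral_abs_deriv_mul measurableSet_Ioo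
    (fun θ _ => (((hasDerivAt_sin θ).const_mul r).add_const _).hasDerivWithinAt)
    (hφ.injOn.mono Ioo_subset_Icc_self), setLIntegral_congr_fun measurableSet_Ioo hjac]
  simp only [lintegral_const, Measure.restrict_apply MeasurableSet.univ, univ_inter,
    volume_Ioo, one_mul]
  ring_nf

theorem Hmq_one {m : ℝ} (hm : -1 < m) : Hmq m 1 = ENNReal.ofReal π := by
  rw [Hmq_eq, ← setLIntegral_Ioo_invSqrt_sub_mul_sub (by linarith : -m < 1)]
  simp only [radicand_one hm.ne', sub_neg_eq_add]

theorem two_mul_invSqrt_radicand_one_le {m q y : ℝ} (hq : 1 ≤ q) (hm0 : 0 ≤ m) (hm1 : m ≤ 1)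
    (hy : y ∈ Ioo (-m) 1) :
    2 * invSqrt (radicand m 1 y) ≤
      invSqrt (radicand m q y) + invSqrt (radicand m q (-m + 1 - y)) := by
  rw [radicand_one (by linarith)]
  exact two_mul_invSqrt_le_add (mul_pos (by linarith [hy.2]) (by linarith [hy.1]))
    (radicand_add_le hq hm0 hm1 hy.1.le (by linarith [hy.2]) (by ring))

theorem two_mul_invSqrt_radicand_one_lt {m q y : ℝ} (hq : 1 < q) (hm0 : 0 ≤ m) (hm1 : m < 1)
    (hy : y ∈ Ioo (-m) 1) :
    2 * invSqrt (radicand m 1 y) <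
      invSqrt (radicand m q y) + invSqrt (radicand m q (-m + 1 - y)) := by
  rw [radicand_one (by linarith)]
  exact two_mul_invSqrt_lt_add (mul_pos (by linarith [hy.2]) (by linarith [hy.1]))
    (radicand_add_lt hq hm0 hm1 hy.1 (by linarith [hy.2]) (by ring))

/-- `H(m,q) ≥ H(m,1) = π` for all `m ∈ [0,1]`, `q ∈ [1,2]`, with strict inequality when
`m < 1` and `q > 1`; hence for `q ∈ (1,2]`, `H(m,q) = π` forces `m = 1`. -/
theorem statement19 (m q : ℝ) (hm : m ∈ Set.Icc (0 : ℝ) 1) (hq : q ∈ Set.Icc (1 : ℝ) 2) :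
    Hmq m 1 = ENNReal.ofReal π ∧
    Hmq m 1 ≤ Hmq m q ∧
    (m < 1 → 1 < q → ENNReal.ofReal π < Hmq m q) ∧
    (1 < q → Hmq m q = ENNReal.ofReal π → m = 1) := by
  obtain ⟨hm0, hm1⟩ := hm
  have hH1 : Hmq m 1 = ENNReal.ofReal π := Hmq_one (by linarith)
  have hlt (hm1' : m < 1) (hq' : 1 < q) : Hmq m 1 < Hmq m q :=
    setLIntegral_Ioo_lt_of_two_mul_lt_add_reflect (by linarith) (measurable_invSqrt_radicand m q)
      (hH1 ▸ ENNReal.ofReal_ne_top : Hmq m 1 ≠ ∞)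
      fun _ hy => two_mul_invSqrt_radicand_one_lt hq' hm0 hm1' hy
  refine ⟨hH1, ?_, fun hm1' hq' => hH1 ▸ hlt hm1' hq', fun hq' hH => ?_⟩
  · exact setLIntegral_Ioo_le_of_two_mul_le_add_reflect (measurable_invSqrt_radicand m q)
      fun _ hy => two_mul_invSqrt_radicand_one_le hq.1 hm0 hm1 hy
  · by_contra hm1'
    exact (hlt (hm1.lt_of_ne hm1') hq').ne (hH1.trans hH.symm)
end
end
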